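/- Let Ω ⊆ 𝔻 be open and convex, let f : Ω → ℝ be positive and twice continuously differentiable, and let w : Ω → 𝔻 be continuously differentiable and satisfy w_z̄ = −(f_z/f)·w̄ on Ω. Fix z₀ ∈ Ω and define, for z ∈ Ω, W(z) = f(z)·Re∫_{[z₀,z]} (w(ζ)/f(ζ)) dζ + (j/f(z))·Im∫_{[z₀,z]} f(ζ)w(ζ) dζ, where the integrals are taken along the straight segment from z₀ to z, i.e. ∫_{[z₀,z]} h dζ = ∫₀¹ h(z₀ + s(z−z₀))·(z−z₀) ds with hyperbolic multiplication. Then W satisfies the main Vekua equation W_z̄ = (f_z̄/f)·W̄ on Ω. -/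

import Mathlib

noncomputable section

open Filter Topology MeasureTheory

/-- Hyperbolic (duplex) numbers 𝔻, modeled as pairs `(Re z, Im z)` with `j ^ 2 = 1`. -/
abbrev Hyp : Type := ℝ × ℝ

/-- Real part of a hyperbolic number. -/
def hre (a : Hyp) : ℝ := a.1

/-- Imaginary part of a hyperbolic number. -/
def him (a : Hyp) : ℝ := a.2

/-- The hyperbolic imaginary unit `j`. -/
def hj : Hyp := (0, 1)

/-- Hyperbolic multiplication: `(x+tj)(x'+t'j) = (xx'+tt') + (xt'+tx')j`. -/
def hmul (a b : Hyp) : Hyp := (a.1 * b.1 + a.2 * b.2, a.1 * b.2 + a.2 * b.1)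

/-- Hyperbolic conjugation: `conj (x+tj) = x - tj`. -/
def hconj (a : Hyp) : Hyp := (a.1, -a.2)

/-- Invertibility of a hyperbolic number: `x² ≠ t²`. -/
def IsInv (a : Hyp) : Prop := a.1 ^ 2 ≠ a.2 ^ 2

/-- Hyperbolic inverse `z⁻¹ = z̄ / |z|²` with `|z|² = x² - t²`. -/
def hinv (a : Hyp) : Hyp := (a.1 / (a.1 ^ 2 - a.2 ^ 2), -a.2 / (a.1 ^ 2 - a.2 ^ 2))

/-- Hyperbolic division. -/
def hdiv (a b : Hyp) : Hyp := hmul a (hinv b)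

/-- Partial derivative in the first (`x`) variable. -/
def pdx (g : Hyp → ℝ) (p : Hyp) : ℝ := deriv (fun s => g (s, p.2)) p.1

/-- Partial derivative in the second (`t`) variable. -/
def pdt (g : Hyp → ℝ) (p : Hyp) : ℝ := deriv (fun s => g (p.1, s)) p.2

/-- The wave operator `□g = g_xx - g_tt`. -/
def waveOp (g : Hyp → ℝ) (p : Hyp) : ℝ := pdx (pdx g) p - pdt (pdt g) p

/-- `w_z = ½(∂_x + j ∂_t) w = ½((u_x+v_t) + (v_x+u_t)j)` for a 𝔻-valued `w = u + jv`. -/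
def dz (w : Hyp → Hyp) (p : Hyp) : Hyp :=
  ((pdx (fun q => (w q).1) p + pdt (fun q => (w q).2) p) / 2,
   (pdx (fun q => (w q).2) p + pdt (fun q => (w q).1) p) / 2)

/-- `w_z̄ = ½(∂_x - j ∂_t) w = ½((u_x-v_t) + (v_x-u_t)j)` for a 𝔻-valued `w = u + jv`. -/
def dzbar (w : Hyp → Hyp) (p : Hyp) : Hyp :=
  ((pdx (fun q => (w q).1) p - pdt (fun q => (w q).2) p) / 2,
   (pdx (fun q => (w q).2) p - pdt (fun q => (w q).1) p) / 2)

/-- `f_z = ½(f_x + j f_t)` for a real-valued `f`. -/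
def rz (f : Hyp → ℝ) (p : Hyp) : Hyp := (pdx f p / 2, pdt f p / 2)

/-- `f_z̄ = ½(f_x - j f_t)` for a real-valued `f`. -/
def rzbar (f : Hyp → ℝ) (p : Hyp) : Hyp := (pdx f p / 2, -(pdt f p) / 2)

/-- 𝔻-differentiability at `z₀`: the difference quotient `(f z - f z₀)·(z - z₀)⁻¹`
tends to `d` as `z → z₀` through points with `z - z₀` invertible. -/
def HasHDerivAt (f : Hyp → Hyp) (d : Hyp) (z₀ : Hyp) : Prop :=
  Filter.Tendsto (fun z => hmul (f z - f z₀) (hinv (z - z₀)))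
    (nhdsWithin z₀ {z | IsInv (z - z₀)}) (nhds d)

/-- `F Ḡ - F̄ G`. -/
def pairDenom (F G : Hyp → Hyp) (z : Hyp) : Hyp :=
  hmul (F z) (hconj (G z)) - hmul (hconj (F z)) (G z)

/-- Characteristic coefficient `a_(F,G) = -(F̄ G_z̄ - F_z̄ Ḡ)/(F Ḡ - F̄ G)`. -/
def aFG (F G : Hyp → Hyp) (z : Hyp) : Hyp :=
  - hdiv (hmul (hconj (F z)) (dzbar G z) - hmul (dzbar F z) (hconj (G z))) (pairDenom F G z)

/-- Characteristic coefficient `b_(F,G) = (F G_z̄ - F_z̄ G)/(F Ḡ - F̄ G)`. -/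
def bFG (F G : Hyp → Hyp) (z : Hyp) : Hyp :=
  hdiv (hmul (F z) (dzbar G z) - hmul (dzbar F z) (G z)) (pairDenom F G z)

/-- Characteristic coefficient `A_(F,G) = -(F̄ G_z - F_z Ḡ)/(F Ḡ - F̄ G)`. -/
def AFG (F G : Hyp → Hyp) (z : Hyp) : Hyp :=
  - hdiv (hmul (hconj (F z)) (dz G z) - hmul (dz F z) (hconj (G z))) (pairDenom F G z)

/-- Characteristic coefficient `B_(F,G) = (F G_z - F_z G)/(F Ḡ - F̄ G)`. -/
def BFG (F G : Hyp → Hyp) (z : Hyp) : Hyp :=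
  hdiv (hmul (F z) (dz G z) - hmul (dz F z) (G z)) (pairDenom F G z)

/-- A generating pair on `Ω`: twice continuously differentiable `F, G` with `Im(F̄G) ≠ 0`. -/
def IsGenPair (F G : Hyp → Hyp) (Ω : Set Hyp) : Prop :=
  ContDiffOn ℝ 2 F Ω ∧ ContDiffOn ℝ 2 G Ω ∧ ∀ z ∈ Ω, him (hmul (hconj (F z)) (G z)) ≠ 0

/-- The idempotent `e₁ = (1+j)/2`. -/
def e1 : Hyp := (1/2, 1/2)

/-- The idempotent `e₂ = (1-j)/2`. -/
def e2 : Hyp := (1/2, -1/2)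

/-- Contour integral `∮_{∂R} h dz` over the counterclockwise boundary of the rectangle
`[x₁,x₂] × [t₁,t₂]`, with hyperbolic multiplication (`dz = dx` on horizontal sides,
`dz = j dt` on vertical sides). -/
def rectContourInt (h : Hyp → Hyp) (x₁ x₂ t₁ t₂ : ℝ) : Hyp :=
  ((∫ x in x₁..x₂, h (x, t₁)) - ∫ x in x₁..x₂, h (x, t₂)) +
    hmul hj ((∫ t in t₁..t₂, h (x₂, t)) - ∫ t in t₁..t₂, h (x₁, t))

/-- Integral `∫_{[z₀,z]} h dζ` along the straight segment from `z₀` to `z`,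
with hyperbolic multiplication. -/
def segInt (h : Hyp → Hyp) (z₀ z : Hyp) : Hyp :=
  ∫ s in (0:ℝ)..1, hmul (h (z₀ + s • (z - z₀))) (z - z₀)

/-- Natural powers in 𝔻. -/
def hpow (a : Hyp) : ℕ → Hyp
  | 0 => (1, 0)
  | n + 1 => hmul a (hpow a n)

/-- Integer powers in 𝔻 (for invertible base). -/
def hzpow (a : Hyp) : ℤ → Hyp
  | Int.ofNat n => hpow a n
  | Int.negSucc n => hinv (hpow a (n + 1))

/-!
Write `W = (f Φ, Ψ / f)`, where `Φ` and `Ψ` are the segment integrals from `z₀` of the real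
1-forms `(w₁/f) dx + (w₂/f) dt` and `f w₂ dx + f w₁ dt`. The equation `w_z̄ = -(f_z/f) w̄` says
exactly that both forms are closed, so by the Poincaré lemma on the convex set `Ω` they are the
differentials of `Φ` and `Ψ`. Hence `Ψ_t = f² Φ_x` and `Ψ_x = f² Φ_t`, and these two relations
turn `W_z̄` into `(f_z̄/f) W̄` by the product and quotient rules.
-/

open Set

section Slices

variable {𝕜 E F G : Type*} [NontriviallyNormedField 𝕜] [NormedAddCommGroup E] [NormedSpace 𝕜 E]
  [NormedAddCommGroup F] [NormedSpace 𝕜 F] [NormedAddCommGroup G] [NormedSpace 𝕜 G]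
  {g : E × F → G} {p : E × F}

theorem DifferentiableAt.slice_fst (hg : DifferentiableAt 𝕜 g p) :
    DifferentiableAt 𝕜 (fun s => g (s, p.2)) p.1 :=
  hg.comp p.1 (hasFDerivAt_prodMk_left p.1 p.2).differentiableAt

theorem DifferentiableAt.slice_snd (hg : DifferentiableAt 𝕜 g p) :
    DifferentiableAt 𝕜 (fun s => g (p.1, s)) p.2 :=
  hg.comp p.2 (hasFDerivAt_prodMk_right p.1 p.2).differentiableAt

end Slices

section PartialDerivatives

variable {g h : Hyp → ℝ} {p : Hyp}

theorem pdx_eq_of_hasFDerivAt {L : Hyp →L[ℝ] ℝ} (hg : HasFDerivAt g L p) : pdx g p = L (1, 0) :=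
  (hg.comp_hasDerivAt p.1 ((hasDerivAt_id p.1).prodMk (hasDerivAt_const p.1 p.2))).deriv

theorem pdt_eq_of_hasFDerivAt {L : Hyp →L[ℝ] ℝ} (hg : HasFDerivAt g L p) : pdt g p = L (0, 1) :=
  (hg.comp_hasDerivAt p.2 ((hasDerivAt_const p.2 p.1).prodMk (hasDerivAt_id p.2))).deriv

theorem pdx_mul (hg : DifferentiableAt ℝ g p) (hh : DifferentiableAt ℝ h p) :
    pdx (fun q => g q * h q) p = pdx g p * h p + g p * pdx h p :=
  deriv_mul hg.slice_fst hh.slice_fst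

theorem pdt_mul (hg : DifferentiableAt ℝ g p) (hh : DifferentiableAt ℝ h p) :
    pdt (fun q => g q * h q) p = pdt g p * h p + g p * pdt h p :=
  deriv_mul hg.slice_snd hh.slice_snd

theorem pdx_div (hg : DifferentiableAt ℝ g p) (hh : DifferentiableAt ℝ h p) (hp : h p ≠ 0) :
    pdx (fun q => g q / h q) p = (pdx g p * h p - g p * pdx h p) / h p ^ 2 :=
  deriv_div hg.slice_fst hh.slice_fst hp

theorem pdt_div (hg : DifferentiableAt ℝ g p) (hh : DifferentiableAt ℝ h p) (hp : h p ≠ 0) :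
    pdt (fun q => g q / h q) p = (pdt g p * h p - g p * pdt h p) / h p ^ 2 :=
  deriv_div hg.slice_snd hh.slice_snd hp

end PartialDerivatives

theorem hdiv_real (a : Hyp) (r : ℝ) : hdiv a (r, 0) = (a.1 / r, a.2 / r) := by
  ext <;> simp [hdiv, hmul, hinv] <;> field_simp

theorem hmul_real (r : ℝ) (a : Hyp) : hmul (r, 0) a = (r * a.1, r * a.2) := by
  ext <;> simp [hmul]

theorem clm_apply_eq_fst_mul_add_snd_mul (L : Hyp →L[ℝ] ℝ) (x : Hyp) :
    L x = x.1 * L (1, 0) + x.2 * L (0, 1) := by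
  have hx : x = x.1 • ((1, 0) : Hyp) + x.2 • ((0, 1) : Hyp) := by ext <;> simp
  conv_lhs => rw [hx]
  rw [map_add, map_smul, map_smul, smul_eq_mul, smul_eq_mul]

def oneForm (a b : Hyp → ℝ) (p : Hyp) : Hyp →L[ℝ] ℝ :=
  a p • ContinuousLinearMap.fst ℝ ℝ ℝ + b p • ContinuousLinearMap.snd ℝ ℝ ℝ

@[simp]
theorem oneForm_apply (a b : Hyp → ℝ) (p x : Hyp) : oneForm a b p x = a p * x.1 + b p * x.2 := by
  simp [oneForm]

section Poincare

variable {Ω : Set Hyp} {a b : Hyp → ℝ} {z₀ z : Hyp}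

theorem hasFDerivAt_oneForm (ha : DifferentiableAt ℝ a z) (hb : DifferentiableAt ℝ b z) :
    HasFDerivAt (oneForm a b)
      ((fderiv ℝ a z).smulRight (ContinuousLinearMap.fst ℝ ℝ ℝ) +
        (fderiv ℝ b z).smulRight (ContinuousLinearMap.snd ℝ ℝ ℝ)) z :=
  (ha.hasFDerivAt.smul_const (ContinuousLinearMap.fst ℝ ℝ ℝ)).add
    (hb.hasFDerivAt.smul_const (ContinuousLinearMap.snd ℝ ℝ ℝ))

theorem hasFDerivAt_curveIntegral_segment_oneForm (hΩ : IsOpen Ω) (hconv : Convex ℝ Ω)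
    (ha : DifferentiableOn ℝ a Ω) (hb : DifferentiableOn ℝ b Ω)
    (hclosed : ∀ p ∈ Ω, pdt a p = pdx b p) (hz₀ : z₀ ∈ Ω) (hz : z ∈ Ω) :
    HasFDerivAt (fun z => ∫ᶜ x in .segment z₀ z, oneForm a b x) (oneForm a b z) z := by
  have hdiff : ∀ p ∈ Ω, DifferentiableAt ℝ a p ∧ DifferentiableAt ℝ b p := fun p hp =>
    ⟨ha.differentiableAt (hΩ.mem_nhds hp), hb.differentiableAt (hΩ.mem_nhds hp)⟩
  refine (hconv.hasFDerivWithinAt_curveIntegral_segment_of_hasFDerivWithinAt_symmetric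
    (fun p hp => (hasFDerivAt_oneForm (hdiff p hp).1 (hdiff p hp).2).hasFDerivWithinAt)
    (fun p hp x _ y _ => ?_) hz₀ hz).hasFDerivAt (hΩ.mem_nhds hz)
  have hsymm : fderiv ℝ a p (0, 1) = fderiv ℝ b p (1, 0) := by
    rw [← pdt_eq_of_hasFDerivAt (hdiff p hp).1.hasFDerivAt,
      ← pdx_eq_of_hasFDerivAt (hdiff p hp).2.hasFDerivAt, hclosed p hp]
  -- `dω p x y - dω p y x = (x.2 * y.1 - x.1 * y.2) * (a_t - b_x)`
  simp only [add_apply, ContinuousLinearMap.smulRight_apply, smul_apply,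
    ContinuousLinearMap.coe_fst', ContinuousLinearMap.coe_snd', smul_eq_mul]
  rw [clm_apply_eq_fst_mul_add_snd_mul (fderiv ℝ a p) x,
    clm_apply_eq_fst_mul_add_snd_mul (fderiv ℝ a p) y,
    clm_apply_eq_fst_mul_add_snd_mul (fderiv ℝ b p) x,
    clm_apply_eq_fst_mul_add_snd_mul (fderiv ℝ b p) y, hsymm]
  ring

theorem segInt_eq_curveIntegral {h : Hyp → Hyp} (hh : ContinuousOn h (segment ℝ z₀ z)) :
    segInt h z₀ z =
      (∫ᶜ x in .segment z₀ z, oneForm (fun p => (h p).1) (fun p => (h p).2) x,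
        ∫ᶜ x in .segment z₀ z, oneForm (fun p => (h p).2) (fun p => (h p).1) x) := by
  have hint : IntervalIntegrable
      (fun s : ℝ => hmul (h (AffineMap.lineMap z₀ z s)) (z - z₀)) volume 0 1 := by
    have hmaps : MapsTo (AffineMap.lineMap z₀ z) (uIcc (0 : ℝ) 1) (segment ℝ z₀ z) := by
      rw [uIcc_of_le zero_le_one, segment_eq_image_lineMap]
      exact mapsTo_image _ _
    have hc := hh.comp (AffineMap.lineMap_continuous).continuousOn hmaps
    exact ContinuousOn.intervalIntegrable <|
      ((hc.fst.mul continuousOn_const).add (hc.snd.mul continuousOn_const)).prodMk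
        ((hc.fst.mul continuousOn_const).add (hc.snd.mul continuousOn_const))
  have hline (s : ℝ) : z₀ + s • (z - z₀) = AffineMap.lineMap z₀ z s := by
    rw [AffineMap.lineMap_apply_module', add_comm]
  simp only [segInt, curveIntegral_segment, oneForm_apply, hline]
  refine Prod.ext ?_ ?_
  · exact ((ContinuousLinearMap.fst ℝ ℝ ℝ).intervalIntegral_comp_comm hint).symm
  · refine ((ContinuousLinearMap.snd ℝ ℝ ℝ).intervalIntegral_comp_comm hint).symm.trans ?_
    simp only [ContinuousLinearMap.coe_snd', hmul]
    congr 1 with s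
    ring

theorem hasFDerivAt_hre_segInt {h : Hyp → Hyp} (hΩ : IsOpen Ω) (hconv : Convex ℝ Ω)
    (hh : DifferentiableOn ℝ h Ω)
    (hclosed : ∀ p ∈ Ω, pdt (fun q => (h q).1) p = pdx (fun q => (h q).2) p)
    (hz₀ : z₀ ∈ Ω) (hz : z ∈ Ω) :
    HasFDerivAt (fun z => hre (segInt h z₀ z))
      (oneForm (fun q => (h q).1) (fun q => (h q).2) z) z := by
  refine (hasFDerivAt_curveIntegral_segment_oneForm hΩ hconv hh.fst hh.snd hclosed hz₀ hz)
    |>.congr_of_eventuallyEq ?_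
  filter_upwards [hΩ.mem_nhds hz] with q hq
  rw [segInt_eq_curveIntegral (hh.continuousOn.mono (hconv.segment_subset hz₀ hq))]
  rfl

theorem hasFDerivAt_him_segInt {h : Hyp → Hyp} (hΩ : IsOpen Ω) (hconv : Convex ℝ Ω)
    (hh : DifferentiableOn ℝ h Ω)
    (hclosed : ∀ p ∈ Ω, pdt (fun q => (h q).2) p = pdx (fun q => (h q).1) p)
    (hz₀ : z₀ ∈ Ω) (hz : z ∈ Ω) :
    HasFDerivAt (fun z => him (segInt h z₀ z))
      (oneForm (fun q => (h q).2) (fun q => (h q).1) z) z := by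
  refine (hasFDerivAt_curveIntegral_segment_oneForm hΩ hconv hh.snd hh.fst hclosed hz₀ hz)
    |>.congr_of_eventuallyEq ?_
  filter_upwards [hΩ.mem_nhds hz] with q hq
  rw [segInt_eq_curveIntegral (hh.continuousOn.mono (hconv.segment_subset hz₀ hq))]
  rfl

end Poincare

section Vekua

variable {f : Hyp → ℝ} {w : Hyp → Hyp} {p : Hyp}

theorem vekua_components (hf : f p ≠ 0)
    (hV : dzbar w p = -hmul (hdiv (rz f p) (f p, 0)) (hconj (w p))) :
    f p * (pdx (fun q => (w q).1) p - pdt (fun q => (w q).2) p) =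
        pdt f p * (w p).2 - pdx f p * (w p).1 ∧
      f p * (pdx (fun q => (w q).2) p - pdt (fun q => (w q).1) p) =
        pdx f p * (w p).2 - pdt f p * (w p).1 := by
  rw [hdiv_real] at hV
  simp only [dzbar, rz, hmul, hconj, Prod.neg_mk, Prod.mk.injEq] at hV
  obtain ⟨h₁, h₂⟩ := hV
  field_simp at h₁ h₂
  constructor
  · linear_combination h₁
  · linear_combination h₂

theorem pdt_div_eq_pdx_div_of_vekua (hw : DifferentiableAt ℝ w p) (hf : DifferentiableAt ℝ f p)
    (hf0 : f p ≠ 0) (hV : dzbar w p = -hmul (hdiv (rz f p) (f p, 0)) (hconj (w p))) :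
    pdt (fun q => (w q).1 / f q) p = pdx (fun q => (w q).2 / f q) p := by
  rw [pdt_div hw.fst hf hf0, pdx_div hw.snd hf hf0]
  congr 1
  linear_combination -(vekua_components hf0 hV).2

theorem pdt_mul_eq_pdx_mul_of_vekua (hw : DifferentiableAt ℝ w p) (hf : DifferentiableAt ℝ f p)
    (hf0 : f p ≠ 0) (hV : dzbar w p = -hmul (hdiv (rz f p) (f p, 0)) (hconj (w p))) :
    pdt (fun q => f q * (w q).2) p = pdx (fun q => f q * (w q).1) p := by
  rw [pdt_mul hf hw.snd, pdx_mul hf hw.fst]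
  linear_combination -(vekua_components hf0 hV).1

end Vekua

theorem dzbar_mul_div_eq_main_vekua {f Φ Ψ : Hyp → ℝ} {z : Hyp} (hf : DifferentiableAt ℝ f z)
    (hf0 : f z ≠ 0) (hΦ : DifferentiableAt ℝ Φ z) (hΨ : DifferentiableAt ℝ Ψ z)
    (hx : pdt Ψ z = f z ^ 2 * pdx Φ z) (ht : pdx Ψ z = f z ^ 2 * pdt Φ z) :
    dzbar (fun q => ((f q * Φ q, Ψ q / f q) : Hyp)) z =
      hmul (hdiv (rzbar f z) (f z, 0)) (hconj (f z * Φ z, Ψ z / f z)) := by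
  simp only [dzbar, rzbar, hdiv_real, hmul, hconj]
  rw [pdx_mul hf hΦ, pdt_mul hf hΦ, pdx_div hΨ hf hf0, pdt_div hΨ hf hf0, hx, ht]
  ext <;> field_simp <;> ring

/-- the `(F,G)`-antiderivative. If `w ∈ C¹(Ω)` solves `w_z̄ = −(f_z/f)w̄` on
an open convex `Ω` and `W(z) = f(z)·Re∫_{[z₀,z]}(w/f) dζ + (j/f(z))·Im∫_{[z₀,z]} f·w dζ`,
then `W` solves the main Vekua equation `W_z̄ = (f_z̄/f)W̄` on `Ω`. -/
theorem antiderivative_solves_main_vekua (Ω : Set Hyp) (hΩ : IsOpen Ω) (hconv : Convex ℝ Ω)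
    (f : Hyp → ℝ) (hf : ContDiffOn ℝ 2 f Ω) (hfpos : ∀ p ∈ Ω, 0 < f p)
    (w : Hyp → Hyp) (hw : ContDiffOn ℝ 1 w Ω)
    (hVekua : ∀ p ∈ Ω, dzbar w p = - hmul (hdiv (rz f p) (f p, 0)) (hconj (w p)))
    (z₀ : Hyp) (hz₀ : z₀ ∈ Ω)
    (W : Hyp → Hyp)
    (hWdef : ∀ z, W z =
      ((f z * hre (segInt (fun ζ => hdiv (w ζ) (f ζ, 0)) z₀ z),
        him (segInt (fun ζ => hmul ((f ζ, 0) : Hyp) (w ζ)) z₀ z) / f z) : Hyp)) :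
    ∀ z ∈ Ω, dzbar W z = hmul (hdiv (rzbar f z) (f z, 0)) (hconj (W z)) := by
  intro z hz
  have hf1 : ContDiffOn ℝ 1 f Ω := hf.of_le one_le_two
  have hf0 : ∀ p ∈ Ω, f p ≠ 0 := fun p hp => (hfpos p hp).ne'
  have hdiff : ∀ p ∈ Ω, DifferentiableAt ℝ f p ∧ DifferentiableAt ℝ w p := fun p hp =>
    ⟨(hf1.contDiffAt (hΩ.mem_nhds hp)).differentiableAt one_ne_zero,
      (hw.contDiffAt (hΩ.mem_nhds hp)).differentiableAt one_ne_zero⟩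
  simp only [hdiv_real, hmul_real] at hWdef
  obtain rfl : W = _ := funext hWdef
  have hΦ := hasFDerivAt_hre_segInt (h := fun ζ => ((w ζ).1 / f ζ, (w ζ).2 / f ζ)) hΩ hconv
    (((hw.fst.div hf1 hf0).prodMk (hw.snd.div hf1 hf0)).differentiableOn one_ne_zero)
    (fun p hp => pdt_div_eq_pdx_div_of_vekua (hdiff p hp).2 (hdiff p hp).1 (hf0 p hp)
      (hVekua p hp)) hz₀ hz
  have hΨ := hasFDerivAt_him_segInt (h := fun ζ => (f ζ * (w ζ).1, f ζ * (w ζ).2)) hΩ hconv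
    (((hf1.mul hw.fst).prodMk (hf1.mul hw.snd)).differentiableOn one_ne_zero)
    (fun p hp => pdt_mul_eq_pdx_mul_of_vekua (hdiff p hp).2 (hdiff p hp).1 (hf0 p hp)
      (hVekua p hp)) hz₀ hz
  refine dzbar_mul_div_eq_main_vekua (hdiff z hz).1 (hf0 z hz) hΦ.differentiableAt
    hΨ.differentiableAt ?_ ?_ <;>
  · simp only [pdx_eq_of_hasFDerivAt hΦ, pdt_eq_of_hasFDerivAt hΦ, pdx_eq_of_hasFDerivAt hΨ,
      pdt_eq_of_hasFDerivAt hΨ, oneForm_apply]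
    field_simp [hf0 z hz]
    ring
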